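/- arXiv:1602.09037 — 7 statements merged into one kernel-verified Lean document; each statement's English description precedes it below -/
import Mathlib

section
/- Let O be a CM order and a ∈ O. Then tr(a·ā) ≥ r, where r is the ℤ-rank of the ideal a·ā·O (equivalently, the dimension over ℚ of the span of a·ā·O in ℚ ⊗ O). -/
/-!
The form `⟨x, y⟩ = tr (x σ(y))` is symmetric and positive definite on `O`, and multiplication by
`b = a σ(a)` is self-adjoint and positive for it, as `⟨x, b x⟩ = tr ((a x) σ(a x))`. On the lattice
`L = b O` it is also injective (`b x = 0` with `x = y b` forces `⟨x, x⟩ = ⟨y, b x⟩ = 0`), so its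
matrix `A` has a nonzero integer determinant, and its trace is `tr b`. Writing the real Gram matrix
as `Rᴴ R`, the matrix `R A R⁻¹` is positive semidefinite: the eigenvalues of `A` are nonnegative
reals with product `det A ≥ 1`, and summing `log μ ≤ μ - 1` gives `tr A ≥ rank L`.
-/

/-- The trace of the multiplication-by-`a` endomorphism of the order `O`. -/
noncomputable def trform {O : Type*} [CommRing O] (a : O) : ℤ :=
  LinearMap.trace ℤ O (LinearMap.mulLeft ℤ a)

open Matrix

theorem Real.card_le_sum_of_one_le_prod {ι : Type*} [Fintype ι] {μ : ι → ℝ}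
    (hμ : ∀ i, 0 ≤ μ i) (h : 1 ≤ ∏ i, μ i) : (Fintype.card ι : ℝ) ≤ ∑ i, μ i := by
  have hpos : ∀ i, 0 < μ i := fun i ↦ (hμ i).lt_of_ne fun h0 ↦ by
    rw [Finset.prod_eq_zero (Finset.mem_univ i) h0.symm] at h
    norm_num at h
  have hlog : 0 ≤ ∑ i, Real.log (μ i) := by
    rw [← Real.log_prod fun i _ ↦ (hpos i).ne']
    exact Real.log_nonneg h
  have hsub : ∑ i, Real.log (μ i) ≤ ∑ i, (μ i - 1) :=
    Finset.sum_le_sum fun i _ ↦ Real.log_le_sub_one_of_pos (hpos i)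
  rw [Finset.sum_sub_distrib, Finset.sum_const, Finset.card_univ, nsmul_one] at hsub
  linarith

theorem Matrix.PosSemidef.card_le_trace_of_one_le_det {n : Type*} [Fintype n] [DecidableEq n]
    {S : Matrix n n ℝ} (hS : S.PosSemidef) (h : 1 ≤ S.det) : (Fintype.card n : ℝ) ≤ S.trace := by
  rw [hS.isHermitian.det_eq_prod_eigenvalues] at h
  rw [hS.isHermitian.trace_eq_sum_eigenvalues]
  exact Real.card_le_sum_of_one_le_prod hS.eigenvalues_nonneg (by simpa using h)

open scoped ComplexOrder MatrixOrder in
theorem Matrix.PosDef.exists_isUnit_posSemidef_conj {n 𝕜 : Type*} [Fintype n] [DecidableEq n]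
    [RCLike 𝕜] {G A : Matrix n n 𝕜} (hG : G.PosDef) (hGA : (G * A).PosSemidef) :
    ∃ R : Matrix n n 𝕜, IsUnit R ∧ (R * A * R⁻¹).PosSemidef := by
  obtain ⟨R, rfl⟩ := CStarAlgebra.nonneg_iff_eq_star_mul_self.mp hG.posSemidef.nonneg
  have hR : IsUnit R := isUnit_of_mul_isUnit_right hG.isUnit
  refine ⟨R, hR, ?_⟩
  have hconj : R⁻¹ᴴ * (star R * R * A) * R⁻¹ = R * A * R⁻¹ := by
    rw [star_eq_conjTranspose, ← Matrix.mul_assoc, ← Matrix.mul_assoc, ← conjTranspose_mul,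
      mul_nonsing_inv _ ((isUnit_iff_isUnit_det R).mp hR), conjTranspose_one, Matrix.one_mul]
  rw [← hconj]
  exact hGA.conjTranspose_mul_mul_same R⁻¹

theorem Matrix.posSemidef_map_intCast {ι : Type*} [Fintype ι] {M : Matrix ι ι ℤ} (hM : M.IsSymm)
    (h : ∀ v, 0 ≤ v ⬝ᵥ M *ᵥ v) : (M.map (Int.cast : ℤ → ℝ)).PosSemidef := by
  set q : (ι → ℝ) → ℝ := fun u ↦ u ⬝ᵥ M.map Int.cast *ᵥ u
  have hint (w : ι → ℤ) : q (Int.cast ∘ w) = ((w ⬝ᵥ M *ᵥ w : ℤ) : ℝ) := by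
    simp [q, dotProduct, mulVec]
  have hscale (t : ℝ) (u : ι → ℝ) : q (t • u) = t ^ 2 * q u := by
    simp only [q, mulVec_smul, smul_dotProduct, dotProduct_smul, smul_eq_mul]
    ring
  have hrat (v : ι → ℚ) : 0 ≤ q (Rat.cast ∘ v) := by
    obtain ⟨⟨d, hd⟩, hdv⟩ := IsLocalization.exist_integer_multiples_of_finite (nonZeroDivisors ℤ) v
    choose w hw using hdv
    have hwv : Int.cast ∘ w = (d : ℝ) • (Rat.cast ∘ v : ι → ℝ) := by
      funext i
      simpa using congrArg (Rat.cast : ℚ → ℝ) (hw i)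
    have hq := hint w
    rw [hwv, hscale] at hq
    have hd0 : (d : ℝ) ≠ 0 := by exact_mod_cast nonZeroDivisors.ne_zero hd
    refine (mul_nonneg_iff_of_pos_left (c := (d : ℝ) ^ 2) (by positivity)).mp ?_
    rw [hq]
    exact_mod_cast h w
  refine posSemidef_iff_dotProduct_mulVec.mpr ⟨?_, fun x ↦ ?_⟩
  · rw [IsHermitian, conjTranspose_eq_transpose_of_trivial]
    exact hM.map _
  · rw [star_trivial]
    refine (DenseRange.piMap fun _ ↦ Rat.denseRange_cast).induction_on x ?_ hrat
    exact isClosed_le continuous_const (by fun_prop)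

theorem Matrix.card_le_trace_of_posDef_mul {ι : Type*} [Fintype ι] [DecidableEq ι]
    {G A : Matrix ι ι ℤ} (hG : G.IsSymm) (hGpos : ∀ v ≠ 0, 0 < v ⬝ᵥ G *ᵥ v)
    (hGA : (G * A).IsSymm) (hGApos : ∀ v, 0 ≤ v ⬝ᵥ (G * A) *ᵥ v) (hA : A.det ≠ 0) :
    (Fintype.card ι : ℤ) ≤ A.trace := by
  have hGdet : G.det ≠ 0 := fun h0 ↦ by
    obtain ⟨v, hv, hGv⟩ := exists_mulVec_eq_zero_iff.mpr h0
    simpa [hGv] using hGpos v hv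
  have hGnonneg (v : ι → ℤ) : 0 ≤ v ⬝ᵥ G *ᵥ v := by
    rcases eq_or_ne v 0 with rfl | hv
    · simp
    · exact (hGpos v hv).le
  have hGr : (G.map (Int.cast : ℤ → ℝ)).PosDef :=
    (posSemidef_map_intCast hG hGnonneg).posDef_iff_det_ne_zero.mpr (by
      rw [← Int.cast_det]; exact_mod_cast hGdet)
  have hGAr : (G.map (Int.cast : ℤ → ℝ) * A.map Int.cast).PosSemidef := by
    convert posSemidef_map_intCast hGA hGApos
    exact (Matrix.map_mul (f := Int.castRingHom ℝ)).symm
  obtain ⟨R, hR, hS⟩ := hGr.exists_isUnit_posSemidef_conj hGAr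
  have hdet : (R * A.map Int.cast * R⁻¹).det = (A.det : ℝ) := by rw [det_conj hR, Int.cast_det]
  have hA1 : 1 ≤ A.det := by
    have : (0 : ℝ) ≤ A.det := hdet ▸ hS.det_nonneg
    have : 0 ≤ A.det := by exact_mod_cast this
    omega
  have htr : (R * A.map Int.cast * R⁻¹).trace = (A.trace : ℝ) := by
    rw [trace_conj hR]
    simp [Matrix.trace]
  have h1 : (1 : ℝ) ≤ (R * A.map Int.cast * R⁻¹).det := by rw [hdet]; exact_mod_cast hA1
  exact_mod_cast htr ▸ hS.card_le_trace_of_one_le_det h1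

theorem LinearMap.BilinForm.finrank_le_trace_of_posDef {L : Type*} [AddCommGroup L]
    [Module.Free ℤ L] [Module.Finite ℤ L] {B : LinearMap.BilinForm ℤ L} (hB : B.IsSymm)
    (hBpos : ∀ x ≠ 0, 0 < B x x) {f : Module.End ℤ L} (hBf : (B.compRight f).IsSymm)
    (hBfpos : ∀ x, 0 ≤ B x (f x)) (hf : Function.Injective f) :
    (Module.finrank ℤ L : ℤ) ≤ LinearMap.trace ℤ L f := by
  classical
  let c := Module.Free.chooseBasis ℤ L
  rw [Module.finrank_eq_card_chooseBasisIndex, LinearMap.trace_eq_matrix_trace ℤ c]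
  refine card_le_trace_of_posDef_mul ((isSymm_toMatrix_iff_isSymm c).mpr hB) (fun v hv ↦ ?_)
    (toMatrix_compRight c B f ▸ (isSymm_toMatrix_iff_isSymm c).mpr hBf) (fun v ↦ ?_) ?_
  · rw [dotProduct_toMatrix_mulVec]
    exact hBpos _ (c.equivFun.symm.map_ne_zero_iff.mpr hv)
  · rw [← toMatrix_compRight, dotProduct_toMatrix_mulVec]
    exact hBfpos _
  · rw [LinearMap.det_toMatrix, Ne, LinearMap.det_eq_zero_iff_ker_ne_bot, not_not]
    exact LinearMap.ker_eq_bot.mpr hf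

section CMOrder

variable {O : Type*} [CommRing O] (σ : O ≃+* O)

theorem trform_map (x : O) : trform (σ x) = trform x :=
  Algebra.trace_eq_of_algEquiv (AlgEquiv.ofRingEquiv (f := σ) fun n ↦ by simp) x

noncomputable def conjTraceForm : LinearMap.BilinForm ℤ O :=
  (Algebra.traceForm ℤ O).compRight (σ : O →+* O).toIntAlgHom.toLinearMap

@[simp]
theorem conjTraceForm_apply (x y : O) : conjTraceForm σ x y = trform (x * σ y) := rfl

variable {σ}

theorem conjTraceForm_isSymm (hσ : ∀ x, σ (σ x) = x) : (conjTraceForm σ).IsSymm :=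
  ⟨fun x y ↦ by
    rw [conjTraceForm_apply, conjTraceForm_apply, ← trform_map σ, map_mul, hσ, mul_comm]⟩

theorem conjTraceForm_mul_right_eq_mul_left {b : O} (hb : σ b = b) (x y : O) :
    conjTraceForm σ x (b * y) = conjTraceForm σ (b * x) y := by
  rw [conjTraceForm_apply, conjTraceForm_apply, map_mul, hb, mul_left_comm, mul_assoc]

theorem conjTraceForm_self_nonneg (hpos : ∀ x : O, x ≠ 0 → 0 < trform (x * σ x)) (x : O) :
    0 ≤ conjTraceForm σ x x := by
  rcases eq_or_ne x 0 with rfl | hx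
  · simp
  · exact (hpos x hx).le

theorem eq_zero_of_mem_span_of_mul_eq_zero (hpos : ∀ x : O, x ≠ 0 → 0 < trform (x * σ x))
    {b x : O} (hb : σ b = b) (hx : x ∈ Ideal.span {b}) (hbx : b * x = 0) : x = 0 := by
  obtain ⟨y, rfl⟩ := Ideal.mem_span_singleton'.mp hx
  by_contra hne
  have h : conjTraceForm σ (y * b) (y * b) = conjTraceForm σ y (b * (y * b)) := by
    rw [conjTraceForm_mul_right_eq_mul_left hb, mul_comm b y]
  rw [hbx, map_zero] at h
  exact (hpos _ hne).ne' h

end CMOrder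

/-- In a CM order, `tr (a * σ a)` is at least the `ℤ`-rank of the ideal `(a * σ a)`. -/
theorem cm_order_trace_ge_rank {O : Type*} [CommRing O]
    [Module.Free ℤ O] [Module.Finite ℤ O]
    (σ : O ≃+* O) (hσ : ∀ x : O, σ (σ x) = x)
    (hpos : ∀ x : O, x ≠ 0 → 0 < trform (x * σ x))
    (a : O) :
    (Module.finrank ℤ
        (Submodule.restrictScalars ℤ (Ideal.span ({a * σ a} : Set O))) : ℤ)
      ≤ trform (a * σ a) := by
  set b := a * σ a
  have hb : σ b = b := by rw [map_mul, hσ, mul_comm]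
  set L := Submodule.restrictScalars ℤ (Ideal.span ({b} : Set O))
  have hbL (x : O) : LinearMap.mulLeft ℤ b x ∈ L :=
    Ideal.mul_mem_right x _ (Ideal.mem_span_singleton_self b)
  rw [trform, ← LinearMap.trace_restrict_eq_of_forall_mem L _ hbL]
  refine LinearMap.BilinForm.finrank_le_trace_of_posDef ((conjTraceForm_isSymm hσ).restrict L)
    (fun x hx ↦ hpos x (by simpa using hx)) ⟨fun x y ↦ ?_⟩ (fun x ↦ ?_) ?_
  · exact (conjTraceForm_mul_right_eq_mul_left hb x y).trans ((conjTraceForm_isSymm hσ).eq _ _)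
  · show 0 ≤ conjTraceForm σ x (b * x)
    rw [show conjTraceForm σ x (b * x) = conjTraceForm σ (a * x) (a * x) by
      simp only [conjTraceForm_apply, b, map_mul, hσ]; ring_nf]
    exact conjTraceForm_self_nonneg hpos _
  · refine (injective_iff_map_eq_zero _).mpr fun x hx ↦ Subtype.ext ?_
    exact eq_zero_of_mem_span_of_mul_eq_zero hpos hb x.2 (congrArg Subtype.val hx)
end

section
/- In the CM order B = ℤ[X]/(X^n − 1) with involution induced by X ↦ X^{n−1}, the group of roots of unity μ(B) is exactly {±X^i : 0 ≤ i < n}, i.e., it is generated by X and −1. -/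
/-!
Write `w = ∑_{i<n} c_i X^i` with `c_i ∈ ℤ`. For every `n`-th root of unity `ζ^j` in `ℂ`, evaluation
`X ↦ ζ^j` is a ring map out of `ℤ[X]/(X^n - 1)`, so if `w` has finite order then `|w(ζ^j)| = 1`.
By Parseval for the discrete Fourier transform, `∑_j |w(ζ^j)|^2 = n ∑_i c_i^2`, hence
`∑_i c_i^2 = 1`: exactly one coefficient is `±1` and `w = ±X^i`.
-/

open Finset Polynomial ComplexConjugate

theorem geom_sum_eq_ite_of_pow_eq_one {K : Type*} [DivisionRing K] [DecidableEq K] {z : K} {n : ℕ}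
    (hz : z ^ n = 1) :
    ∑ j ∈ range n, z ^ j = if z = 1 then (n : K) else 0 := by
  split_ifs with h
  · simp [h]
  · rw [geom_sum_eq h, hz, sub_self, zero_div]

theorem IsPrimitiveRoot.sum_pow_mul_div_pow_mul {K : Type*} [Field K] {ζ : K} {n : ℕ}
    (hζ : IsPrimitiveRoot ζ n) {i l : ℕ} (hi : i < n) (hl : l < n) :
    ∑ j ∈ range n, ζ ^ (j * i) / ζ ^ (j * l) = if i = l then (n : K) else 0 := by
  have hpow : (ζ ^ i / ζ ^ l) ^ n = 1 := by
    rw [div_pow, ← pow_mul, ← pow_mul, pow_mul', pow_mul' ζ l, hζ.pow_eq_one, one_pow, one_pow,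
      div_one]
  have hone : ζ ^ i / ζ ^ l = 1 ↔ i = l := by
    rw [div_eq_one_iff_eq (pow_ne_zero l (hζ.ne_zero (by omega)))]
    exact ⟨fun h => hζ.pow_inj hi hl h, fun h => h ▸ rfl⟩
  classical
  simp_rw [pow_mul', ← div_pow]
  rw [geom_sum_eq_ite_of_pow_eq_one hpow]
  exact if_congr hone rfl rfl

theorem IsPrimitiveRoot.sum_norm_sq_sum_mul_pow {ζ : ℂ} {n : ℕ} (hζ : IsPrimitiveRoot ζ n)
    (c : ℕ → ℂ) :
    ∑ j ∈ range n, ‖∑ i ∈ range n, c i * ζ ^ (j * i)‖ ^ 2 = n * ∑ i ∈ range n, ‖c i‖ ^ 2 := by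
  rcases n.eq_zero_or_pos with rfl | hn
  · simp
  have hconj : ∀ m, conj (ζ ^ m) = (ζ ^ m)⁻¹ := fun m =>
    (Complex.inv_eq_conj (by rw [norm_pow, hζ.norm'_eq_one hn.ne', one_pow])).symm
  apply Complex.ofReal_injective
  push_cast
  simp_rw [← Complex.mul_conj', map_sum, map_mul, hconj, sum_mul_sum, mul_sum]
  calc ∑ j ∈ range n, ∑ i ∈ range n, ∑ l ∈ range n,
        c i * ζ ^ (j * i) * (conj (c l) * (ζ ^ (j * l))⁻¹)
      = ∑ i ∈ range n, ∑ l ∈ range n,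
        c i * conj (c l) * ∑ j ∈ range n, ζ ^ (j * i) / ζ ^ (j * l) := by
        rw [sum_comm]
        refine sum_congr rfl fun i _ => ?_
        rw [sum_comm]
        refine sum_congr rfl fun l _ => ?_
        rw [mul_sum]
        refine sum_congr rfl fun j _ => ?_
        ring
    _ = ∑ i ∈ range n, n * (c i * conj (c i)) := by
        refine sum_congr rfl fun i hi => ?_
        rw [sum_eq_single i]
        · rw [hζ.sum_pow_mul_div_pow_mul (mem_range.1 hi) (mem_range.1 hi), if_pos rfl, mul_comm]
        · intro l hl hli
          rw [hζ.sum_pow_mul_div_pow_mul (mem_range.1 hi) (mem_range.1 hl), if_neg hli.symm,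
            mul_zero]
        · exact fun h => absurd hi h

theorem Int.exists_eq_one_or_eq_neg_one_of_sum_sq_eq_one {ι : Type*} {s : Finset ι} {c : ι → ℤ}
    (h : ∑ i ∈ s, c i ^ 2 = 1) :
    ∃ i ∈ s, (c i = 1 ∨ c i = -1) ∧ ∀ l ∈ s, l ≠ i → c l = 0 := by
  classical
  obtain ⟨i, hi, hci⟩ : ∃ i ∈ s, c i ≠ 0 := by
    by_contra! h0
    rw [sum_eq_zero fun i hi => by rw [h0 i hi, sq, zero_mul]] at h
    exact zero_ne_one h
  have hsplit : c i ^ 2 + ∑ l ∈ s.erase i, c l ^ 2 = 1 := by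
    rw [add_sum_erase s (fun l => c l ^ 2) hi, h]
  have hrest : 0 ≤ ∑ l ∈ s.erase i, c l ^ 2 := sum_nonneg fun l _ => sq_nonneg (c l)
  have hpos : 0 < c i ^ 2 := by positivity
  have hrest0 : ∑ l ∈ s.erase i, c l ^ 2 = 0 := by omega
  refine ⟨i, hi, mul_self_eq_one_iff.1 (by rw [← sq]; omega), fun l hl hli => ?_⟩
  exact pow_eq_zero_iff two_ne_zero |>.1 <|
    (sum_eq_zero_iff_of_nonneg fun l _ => sq_nonneg (c l)).1 hrest0 l (mem_erase.2 ⟨hli, hl⟩)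

theorem Polynomial.eq_C_mul_X_pow_of_coeff_eq_zero {R : Type*} [Semiring R] {p : R[X]} {n i : ℕ}
    (hp : p.natDegree < n) (h : ∀ l ∈ range n, l ≠ i → p.coeff l = 0) :
    p = C (p.coeff i) * X ^ i := by
  ext l
  rw [coeff_C_mul_X_pow]
  split_ifs with hl
  · rw [hl]
  · by_cases hln : l < n
    · exact h l (mem_range.2 hln) hl
    · exact coeff_eq_zero_of_natDegree_lt (by omega)

namespace AdjoinRoot

theorem root_X_pow_sub_one_pow {R : Type*} [CommRing R] (n : ℕ) :
    root (X ^ n - 1 : R[X]) ^ n = 1 := by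
  rw [← sub_eq_zero, ← mk_X, ← map_pow, ← map_one (mk _), ← map_sub, mk_self]

theorem exists_natDegree_lt_mk_eq {R : Type*} [CommRing R] [Nontrivial R] {n : ℕ} (hn : 0 < n)
    (w : AdjoinRoot (X ^ n - 1 : R[X])) : ∃ p : R[X], p.natDegree < n ∧ mk _ p = w := by
  have hmonic : (X ^ n - 1 : R[X]).Monic := by simpa using monic_X_pow_sub_C (1 : R) hn.ne'
  have hdeg : (X ^ n - 1 : R[X]).natDegree = n := by
    simpa using natDegree_X_pow_sub_C (r := (1 : R))
  have hne : (X ^ n - 1 : R[X]) ≠ 1 := fun h => by rw [h, natDegree_one] at hdeg; omega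
  obtain ⟨q, rfl⟩ := mk_surjective w
  refine ⟨q %ₘ (X ^ n - 1), hdeg ▸ natDegree_modByMonic_lt q hmonic hne, ?_⟩
  rw [← modByMonicHom_mk hmonic]
  exact mk_leftInverse hmonic _

theorem sum_sq_coeff_eq_one_of_mk_pow_eq_one {n : ℕ} {p : ℤ[X]} (hp : p.natDegree < n) {k : ℕ}
    (hk : k ≠ 0) (h : mk (X ^ n - 1 : ℤ[X]) p ^ k = 1) : ∑ i ∈ range n, p.coeff i ^ 2 = 1 := by
  obtain ⟨ζ, hζ⟩ : ∃ ζ : ℂ, IsPrimitiveRoot ζ n := ⟨_, Complex.isPrimitiveRoot_exp n (by omega)⟩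
  have hnorm : ∀ j, ‖∑ i ∈ range n, (p.coeff i : ℂ) * ζ ^ (j * i)‖ = 1 := by
    intro j
    have hroot : (X ^ n - 1 : ℤ[X]).eval₂ (Int.castRingHom ℂ) (ζ ^ j) = 0 := by
      simp [← pow_mul, pow_mul', hζ.pow_eq_one]
    have heval : lift _ _ hroot (mk _ p) = ∑ i ∈ range n, (p.coeff i : ℂ) * ζ ^ (j * i) := by
      simp [lift_mk, eval₂_eq_sum_range' _ hp, pow_mul]
    rw [← heval]
    exact Complex.norm_eq_one_of_pow_eq_one (by rw [← map_pow, h, map_one]) hk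
  have hparseval := hζ.sum_norm_sq_sum_mul_pow (fun i => (p.coeff i : ℂ))
  simp only [hnorm, one_pow, sum_const, card_range, nsmul_eq_mul, mul_one, Complex.norm_intCast,
    sq_abs] at hparseval
  exact_mod_cast
    (mul_right_eq_self₀.1 hparseval.symm).resolve_right (Nat.cast_ne_zero.2 (by omega))

theorem exists_pow_eq_one_iff_eq_root_pow {n : ℕ} (hn : 0 < n)
    (w : AdjoinRoot (X ^ n - 1 : ℤ[X])) :
    (∃ k : ℕ, 0 < k ∧ w ^ k = 1) ↔ ∃ i < n, w = root _ ^ i ∨ w = -root _ ^ i := by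
  constructor
  · rintro ⟨k, hk, hwk⟩
    obtain ⟨p, hp, rfl⟩ := exists_natDegree_lt_mk_eq hn w
    obtain ⟨i, hi, hsign, hzero⟩ := Int.exists_eq_one_or_eq_neg_one_of_sum_sq_eq_one
      (sum_sq_coeff_eq_one_of_mk_pow_eq_one hp hk.ne' hwk)
    refine ⟨i, mem_range.1 hi, ?_⟩
    rw [eq_C_mul_X_pow_of_coeff_eq_zero hp hzero]
    rcases hsign with hc | hc <;> simp [hc]
  · rintro ⟨i, -, hw⟩
    have hpow : (root (X ^ n - 1 : ℤ[X]) ^ i) ^ (2 * n) = 1 := by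
      rw [pow_right_comm, pow_mul', root_X_pow_sub_one_pow, one_pow, one_pow]
    refine ⟨2 * n, by omega, ?_⟩
    rcases hw with rfl | rfl
    · exact hpow
    · rwa [(even_two_mul n).neg_pow]

end AdjoinRoot

/-- In `B = ℤ[X]/(X^n − 1)`, the roots of unity are exactly `±X^i`, `0 ≤ i < n`. -/
theorem roots_of_unity_in_group_ring_quotient (n : ℕ) (hn : 0 < n)
    (w : Polynomial ℤ ⧸ Ideal.span ({Polynomial.X ^ n - 1} : Set (Polynomial ℤ))) :
    (∃ k : ℕ, 0 < k ∧ w ^ k = 1) ↔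
      ∃ i : ℕ, i < n ∧
        (w = (Ideal.Quotient.mk (Ideal.span ({Polynomial.X ^ n - 1} : Set (Polynomial ℤ)))
                Polynomial.X) ^ i ∨
         w = -(Ideal.Quotient.mk (Ideal.span ({Polynomial.X ^ n - 1} : Set (Polynomial ℤ)))
                Polynomial.X) ^ i) :=
  -- `AdjoinRoot f` is by definition `R[X] ⧸ Ideal.span {f}`, and `root f` is the class of `X`.
  AdjoinRoot.exists_pow_eq_one_iff_eq_root_pow hn w
end

section
/- In B = ℤ[X]/(X^n − 1) with involution induced by X ↦ X^{n−1}, the only idempotent elements are 0 and 1. -/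
/-!
Multiplication by an idempotent `e` is a projection of the free `ℤ`-module `B` of rank `n`, so its
trace is the rank of its image: an integer between `0` and `n`, and zero only if `e = 0`. On the
other hand every trace in `B` is divisible by `n`, because `X ^ k` permutes the basis
`1, X, …, X ^ (n - 1)` without fixed points for `0 < k < n`. As `tr e + tr (1 - e) = tr 1 = n`,
one of the idempotents `e`, `1 - e` has trace zero.
-/

open Module Polynomial

namespace PowerBasis

variable {R S : Type*} [CommRing R] [CommRing S] [Algebra R S]

theorem basis_mul_basis_of_gen_pow_dim_eq_one (pb : PowerBasis R S) (h : pb.gen ^ pb.dim = 1)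
    (i j : Fin pb.dim) : pb.basis i * pb.basis j = pb.basis (i + j) := by
  simp only [pb.basis_eq_pow, ← pow_add, Fin.val_add, ← pow_eq_pow_mod _ h]

theorem trace_basis_of_gen_pow_dim_eq_one (pb : PowerBasis R S) (h : pb.gen ^ pb.dim = 1)
    [NeZero pb.dim] (i : Fin pb.dim) :
    Algebra.trace R S (pb.basis i) = if i = 0 then (pb.dim : R) else 0 := by
  classical
  rw [Algebra.trace_eq_matrix_trace pb.basis, Matrix.trace]
  simp only [Matrix.diag_apply, Algebra.leftMulMatrix_eq_repr_mul,
    pb.basis_mul_basis_of_gen_pow_dim_eq_one h, Basis.repr_self, Finsupp.single_apply,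
    add_eq_right]
  split_ifs <;> simp

theorem dim_dvd_trace_of_gen_pow_dim_eq_one (pb : PowerBasis R S) (h : pb.gen ^ pb.dim = 1)
    (x : S) : (pb.dim : R) ∣ Algebra.trace R S x := by
  rw [← pb.basis.sum_repr x, map_sum]
  refine Finset.dvd_sum fun i _ => ?_
  have : NeZero pb.dim := ⟨i.pos.ne'⟩
  rw [map_smul, pb.trace_basis_of_gen_pow_dim_eq_one h, smul_eq_mul]
  split_ifs <;> simp

end PowerBasis

namespace IsIdempotentElem

variable {R A : Type*} [CommRing R] [IsDomain R] [IsPrincipalIdealRing R] [CommRing A]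
  [Algebra R A] [Module.Free R A] [Module.Finite R A]

theorem algebraTrace_eq_finrank_range {e : A} (he : IsIdempotentElem e) :
    Algebra.trace R A e = finrank R (LinearMap.range (Algebra.lmul R A e)) :=
  (LinearMap.IsIdempotentElem.isProj_range _ (he.map (Algebra.lmul R A))).trace

theorem eq_zero_of_algebraTrace_eq_zero [CharZero R] {e : A} (he : IsIdempotentElem e)
    (h : Algebra.trace R A e = 0) : e = 0 :=
  Algebra.lmul_injective (R := R) <| by
    rw [map_zero]
    exact LinearMap.IsIdempotentElem.eq_zero_of_trace_eq_zero (he.map _) h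

end IsIdempotentElem

theorem IsIdempotentElem.eq_zero_or_eq_one_of_finrank_dvd_trace {A : Type*} [CommRing A]
    [Module.Free ℤ A] [Module.Finite ℤ A]
    (htr : ∀ x : A, (finrank ℤ A : ℤ) ∣ Algebra.trace ℤ A x) {e : A} (he : IsIdempotentElem e) :
    e = 0 ∨ e = 1 := by
  have hsum : Algebra.trace ℤ A e + Algebra.trace ℤ A (1 - e) = finrank ℤ A := by
    rw [← map_add, add_sub_cancel, ← map_one (algebraMap ℤ A), Algebra.trace_algebraMap,
      nsmul_one]
  have hnonneg : ∀ {f : A}, IsIdempotentElem f → 0 ≤ Algebra.trace ℤ A f := fun hf => by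
    rw [hf.algebraTrace_eq_finrank_range]
    positivity
  have hle : ∀ x : A, 0 < Algebra.trace ℤ A x → (finrank ℤ A : ℤ) ≤ Algebra.trace ℤ A x :=
    fun x hx => Int.le_of_dvd hx (htr x)
  obtain h | h : Algebra.trace ℤ A e = 0 ∨ Algebra.trace ℤ A (1 - e) = 0 := by
    have := hnonneg he
    have := hnonneg he.one_sub
    have := hle e
    have := hle (1 - e)
    omega
  · exact .inl (he.eq_zero_of_algebraTrace_eq_zero h)
  · exact .inr (sub_eq_zero.mp (he.one_sub.eq_zero_of_algebraTrace_eq_zero h)).symm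

/-- In `B = ℤ[X]/(X^n − 1)`, the only idempotents are `0` and `1`. -/
theorem idempotents_in_group_ring_quotient (n : ℕ) (hn : 0 < n)
    (e : Polynomial ℤ ⧸ Ideal.span ({Polynomial.X ^ n - 1} : Set (Polynomial ℤ)))
    (he : e * e = e) :
    e = 0 ∨ e = 1 := by
  have hmonic : (X ^ n - 1 : ℤ[X]).Monic := by
    simpa using monic_X_pow_sub_C (1 : ℤ) hn.ne'
  have := hmonic.free_adjoinRoot
  have := hmonic.finite_adjoinRoot
  let pb : PowerBasis ℤ (AdjoinRoot (X ^ n - 1 : ℤ[X])) := AdjoinRoot.powerBasis' hmonic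
  have hdim : pb.dim = n := by simpa [pb] using natDegree_X_pow_sub_C (n := n) (r := (1 : ℤ))
  have hgen : pb.gen ^ pb.dim = 1 := by
    have hroot := AdjoinRoot.mk_self (f := (X ^ n - 1 : ℤ[X]))
    rw [map_sub, map_pow, AdjoinRoot.mk_X, map_one, sub_eq_zero] at hroot
    rw [hdim]
    exact hroot
  exact IsIdempotentElem.eq_zero_or_eq_one_of_finrank_dvd_trace
    (A := AdjoinRoot (X ^ n - 1 : ℤ[X]))
    (fun x => pb.finrank ▸ pb.dim_dvd_trace_of_gen_pow_dim_eq_one hgen x) he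
end

section
/- Let A and B be CM orders (orders with involutive automorphism and positive-definite form x ↦ tr(x·x̄)). Then the tensor product A ⊗ B, equipped with the involution (a ⊗ b)‾ = ā ⊗ b̄, is a CM order; in particular x ↦ tr(x·x̄) on A ⊗ B is positive definite. -/
open TensorProduct

/-!
In ℤ-bases of `A` and `B`, the Gram matrix of `(x, y) ↦ tr (x * ȳ)` on `A ⊗ B` with respect to
the tensor basis is the Kronecker product of the Gram matrices on `A` and `B`, because the trace
of multiplication by `a ⊗ b` is `tr a * tr b`. An integral symmetric matrix that is positive on
nonzero integer vectors is positive definite over `ℝ` (clear denominators, then use density of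
`ℚⁿ`), and a Kronecker product of real positive-definite matrices is positive definite.
-/

open Matrix Kronecker

namespace Matrix

variable {ι κ : Type*} [Fintype ι] [Fintype κ]

lemma exists_intCast_eq_mul_of_rat (q : ι → ℚ) :
    ∃ d : ℤ, d ≠ 0 ∧ ∃ w : ι → ℤ, ∀ i, (w i : ℚ) = d * q i := by
  obtain ⟨⟨d, hd⟩, hint⟩ :=
    IsLocalization.exist_integer_multiples (nonZeroDivisors ℤ) Finset.univ q
  choose w hw using fun i => hint i (Finset.mem_univ i)
  exact ⟨d, nonZeroDivisors.ne_zero hd, w, fun i => by simpa using hw i⟩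

lemma intCast_dotProduct_mulVec {R : Type*} [CommRing R] (G : Matrix ι ι ℤ) (v w : ι → ℤ) :
    ((v ⬝ᵥ G *ᵥ w : ℤ) : R) = ((↑) ∘ v) ⬝ᵥ G.map (↑) *ᵥ ((↑) ∘ w) := by
  rw [← eq_intCast (Int.castRingHom R), RingHom.map_dotProduct]
  congr 1
  ext i
  exact (Int.castRingHom R).map_mulVec G w i

lemma PosSemidef.map_intCast_real {G : Matrix ι ι ℤ} (hG : G.PosSemidef) :
    (G.map ((↑) : ℤ → ℝ)).PosSemidef := by
  refine .of_dotProduct_mulVec_nonneg (hG.isHermitian.map _ fun _ => rfl) fun x => ?_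
  rw [star_trivial]
  have hclosed : IsClosed {x : ι → ℝ | 0 ≤ x ⬝ᵥ G.map (↑) *ᵥ x} :=
    isClosed_le continuous_const (by fun_prop)
  refine (DenseRange.piMap fun _ => Rat.denseRange_cast).induction_on x hclosed fun q => ?_
  set x : ι → ℝ := Pi.map (fun _ => Rat.cast) q
  obtain ⟨d, hd, w, hw⟩ := exists_intCast_eq_mul_of_rat q
  have hscale : ((↑) ∘ w : ι → ℝ) = (d : ℝ) • x := by
    ext i
    simpa [x] using congrArg ((↑) : ℚ → ℝ) (hw i)
  have hnonneg : 0 ≤ (d : ℝ) ^ 2 * (x ⬝ᵥ G.map (↑) *ᵥ x) := calc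
    (0 : ℝ) ≤ ((w ⬝ᵥ G *ᵥ w : ℤ) : ℝ) := by
      exact_mod_cast star_trivial w ▸ hG.dotProduct_mulVec_nonneg w
    _ = (d : ℝ) ^ 2 * (x ⬝ᵥ G.map (↑) *ᵥ x) := by
      rw [intCast_dotProduct_mulVec, hscale, mulVec_smul, dotProduct_smul, smul_dotProduct,
        smul_eq_mul, smul_eq_mul]
      ring
  exact nonneg_of_mul_nonneg_right hnonneg (by positivity)

lemma PosDef.det_ne_zero {R : Type*} [CommRing R] [IsDomain R] [PartialOrder R] [StarRing R]
    [DecidableEq ι] {G : Matrix ι ι R} (hG : G.PosDef) : G.det ≠ 0 := by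
  intro hdet
  obtain ⟨v, hv, hGv⟩ := exists_mulVec_eq_zero_iff.mpr hdet
  simpa [hGv] using hG.dotProduct_mulVec_pos hv

lemma posDef_map_intCast_real_iff {G : Matrix ι ι ℤ} :
    (G.map ((↑) : ℤ → ℝ)).PosDef ↔ G.PosDef := by
  classical
  refine ⟨fun h => .of_dotProduct_mulVec_pos ?_ fun w hw => ?_, fun h => ?_⟩
  · refine map_injective (Int.cast_injective (α := ℝ)) ?_
    rw [conjTranspose_eq_transpose_of_trivial]
    simpa [transpose_map] using h.isHermitian.eq
  · have hw' : (Int.cast ∘ w : ι → ℝ) ≠ 0 := by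
      contrapose! hw
      ext i
      simpa using congrFun hw i
    have := h.dotProduct_mulVec_pos hw'
    rw [star_trivial, ← intCast_dotProduct_mulVec] at this
    simpa using this
  · refine h.posSemidef.map_intCast_real.posDef_iff_det_ne_zero.mpr ?_
    have hdet : (G.map ((↑) : ℤ → ℝ)).det = (G.det : ℝ) := ((Int.castRingHom ℝ).map_det G).symm
    exact hdet ▸ Int.cast_ne_zero.mpr h.det_ne_zero

lemma PosDef.intKronecker {G : Matrix ι ι ℤ} {H : Matrix κ κ ℤ} (hG : G.PosDef)
    (hH : H.PosDef) : (G ⊗ₖ H).PosDef := by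
  rw [← posDef_map_intCast_real_iff] at hG hH ⊢
  have hmap : (G ⊗ₖ H).map ((↑) : ℤ → ℝ) = G.map (↑) ⊗ₖ H.map (↑) := by
    ext
    simp
  exact hmap ▸ hG.kronecker hH

end Matrix

section TraceForm

variable {O : Type*} [CommRing O]

lemma trform_map_ringEquiv (σ : O ≃+* O) (x : O) : trform (σ x) = trform x :=
  Algebra.trace_eq_of_algEquiv σ.toIntAlgEquiv x

noncomputable def twistedTraceForm (σ : O ≃+* O) : LinearMap.BilinForm ℤ O :=
  (Algebra.traceForm ℤ O).compl₂ σ.toIntAlgEquiv.toLinearMap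

lemma twistedTraceForm_apply (σ : O ≃+* O) (x y : O) :
    twistedTraceForm σ x y = trform (x * σ y) :=
  rfl

lemma twistedTraceForm_isSymm {σ : O ≃+* O} (hσ : ∀ x, σ (σ x) = x) :
    (twistedTraceForm σ).IsSymm :=
  ⟨fun x y => by
    rw [twistedTraceForm_apply, twistedTraceForm_apply, ← trform_map_ringEquiv σ, map_mul, hσ,
      mul_comm]⟩

noncomputable def traceGram {ι : Type*} (σ : O ≃+* O) (b : ι → O) : Matrix ι ι ℤ :=
  Matrix.of fun i j => trform (b i * σ (b j))

lemma posDef_traceGram_iff {ι : Type*} [Fintype ι] [DecidableEq ι] (b : Module.Basis ι ℤ O)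
    {σ : O ≃+* O} (hσ : ∀ x, σ (σ x) = x) :
    (traceGram σ b).PosDef ↔ ∀ x : O, x ≠ 0 → 0 < trform (x * σ x) := by
  have hGram : traceGram σ b = LinearMap.BilinForm.toMatrix b (twistedTraceForm σ) := by
    ext i j
    rw [LinearMap.BilinForm.toMatrix_apply, twistedTraceForm_apply]
    rfl
  rw [hGram, ← LinearMap.BilinForm.posDef_toQuadraticMap_iff_matrix b _ (twistedTraceForm_isSymm hσ)]
  rfl

end TraceForm

section TensorProduct

variable {A B : Type*} [CommRing A] [CommRing B]
  [Module.Free ℤ A] [Module.Finite ℤ A] [Module.Free ℤ B] [Module.Finite ℤ B]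

lemma trform_tmul (a : A) (b : B) : trform (a ⊗ₜ[ℤ] b) = trform a * trform b :=
  (congrArg (LinearMap.trace ℤ _) (LinearMap.mulLeft_tmul a b)).trans
    (LinearMap.trace_tensorProduct' _ _)

lemma traceGram_tensorProduct {ι κ : Type*} (bA : Module.Basis ι ℤ A) (bB : Module.Basis κ ℤ B)
    {σA : A ≃+* A} {σB : B ≃+* B} {τ : A ⊗[ℤ] B ≃+* A ⊗[ℤ] B}
    (hτ : ∀ (a : A) (b : B), τ (a ⊗ₜ[ℤ] b) = σA a ⊗ₜ[ℤ] σB b) :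
    traceGram τ (bA.tensorProduct bB) = traceGram σA bA ⊗ₖ traceGram σB bB := by
  ext ⟨i, j⟩ ⟨k, l⟩
  simp only [traceGram, of_apply, kroneckerMap_apply, Module.Basis.tensorProduct_apply, hτ,
    Algebra.TensorProduct.tmul_mul_tmul, trform_tmul]

end TensorProduct

/-- The tensor product of two CM orders, with the involution `(a ⊗ b)‾ = ā ⊗ b̄`,
is again a CM order: the involution is involutive and `x ↦ tr (x * x̄)` is
positive definite. -/
theorem tensor_product_of_cm_orders_is_cm {A B : Type*} [CommRing A] [CommRing B]
    [Module.Free ℤ A] [Module.Finite ℤ A] [Module.Free ℤ B] [Module.Finite ℤ B]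
    (σA : A ≃+* A) (σB : B ≃+* B)
    (hA2 : ∀ x : A, σA (σA x) = x) (hB2 : ∀ x : B, σB (σB x) = x)
    (hA : ∀ x : A, x ≠ 0 → 0 < trform (x * σA x))
    (hB : ∀ x : B, x ≠ 0 → 0 < trform (x * σB x)) :
    ∀ τ : (A ⊗[ℤ] B) ≃+* (A ⊗[ℤ] B),
      (∀ (a : A) (b : B), τ (a ⊗ₜ[ℤ] b) = σA a ⊗ₜ[ℤ] σB b) →
      (∀ z : A ⊗[ℤ] B, τ (τ z) = z) ∧
        ∀ z : A ⊗[ℤ] B, z ≠ 0 → 0 < trform (z * τ z) := by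
  classical
  intro τ hτ
  have hτ2 : ∀ z : A ⊗[ℤ] B, τ (τ z) = z := fun z => by
    induction z using TensorProduct.induction_on with
    | zero => simp only [map_zero]
    | tmul a b => rw [hτ, hτ, hA2, hB2]
    | add x y hx hy => rw [map_add, map_add, hx, hy]
  refine ⟨hτ2, ?_⟩
  let bA := Module.Free.chooseBasis ℤ A
  let bB := Module.Free.chooseBasis ℤ B
  have hGram := ((posDef_traceGram_iff bA hA2).mpr hA).intKronecker
    ((posDef_traceGram_iff bB hB2).mpr hB)
  rw [← traceGram_tensorProduct bA bB hτ] at hGram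
  exact (posDef_traceGram_iff (bA.tensorProduct bB) hτ2).mp hGram
end

section
/- Let A₀, …, A_{m−1} ∈ M_n(ℚ) be matrices such that some ℚ-linear combination of them is invertible. Then there exist integers x₀, …, x_{m−1} with |x_i| ≤ n such that Σ_i x_i A_i is invertible. -/
/-!
`det (∑ i, X i • A i)` is a homogeneous polynomial of degree `n` in the `X i`, and it is nonzero
because it does not vanish at the rational point `c`. A nonzero polynomial of degree at most `n`
in each variable cannot vanish on the whole grid `{0, …, n}ᵐ`, since the grid has `n + 1` points
on each axis (Alon's combinatorial Nullstellensatz, `eq_zero_of_eval_zero_at_prod_finset`).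
-/

open MvPolynomial

theorem MvPolynomial.exists_intCast_eval_ne_zero_of_degreeOf_le {R σ : Type*} [CommRing R]
    [IsDomain R] [CharZero R] [Finite σ] {P : MvPolynomial σ R} (hP : P ≠ 0) {n : ℕ}
    (hdeg : ∀ i, P.degreeOf i ≤ n) :
    ∃ z : σ → ℤ, (∀ i, |z i| ≤ n) ∧ eval (fun i ↦ (z i : R)) P ≠ 0 := by
  classical
  by_contra! hzero
  refine hP <| eq_zero_of_eval_zero_at_prod_finset P
    (fun _ ↦ (Finset.Icc (0 : ℤ) n).image Int.cast) (fun i ↦ ?_) fun x hx ↦ ?_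
  · rw [Finset.card_image_of_injective _ Int.cast_injective, Int.card_Icc, sub_zero,
      ← Nat.cast_succ, Int.toNat_natCast]
    exact Nat.lt_succ_of_le (hdeg i)
  · choose z hz hzx using fun i ↦ Finset.mem_image.mp (hx i)
    obtain rfl : x = fun i ↦ (z i : R) := by ext i; exact (hzx i).symm
    refine hzero z fun i ↦ abs_le.mpr ?_
    obtain ⟨hz₀, hzn⟩ := Finset.mem_Icc.mp (hz i)
    exact ⟨by lia, hzn⟩

theorem MvPolynomial.isHomogeneous_det {σ n R : Type*} [Fintype n] [DecidableEq n] [CommRing R]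
    {M : Matrix n n (MvPolynomial σ R)} (hM : ∀ i j, (M i j).IsHomogeneous 1) :
    M.det.IsHomogeneous (Fintype.card n) := by
  rw [Matrix.det_apply]
  refine IsHomogeneous.sum _ _ _ fun τ _ ↦ ?_
  have hprod := IsHomogeneous.prod Finset.univ (fun i ↦ M (τ i) i) (fun _ ↦ 1) fun i _ ↦ hM _ _
  simp only [Finset.sum_const, Finset.card_univ, smul_eq_mul, mul_one] at hprod
  rw [← mem_homogeneousSubmodule] at hprod ⊢
  rw [Units.smul_def]
  exact zsmul_mem hprod _

namespace Matrix

variable {ι n R : Type*} [Fintype ι] [Fintype n] [DecidableEq n] [CommRing R]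

noncomputable def linearPencil (A : ι → Matrix n n R) : Matrix n n (MvPolynomial ι R) :=
  of fun j k ↦ ∑ i, C (A i j k) * X i

theorem eval_det_linearPencil (A : ι → Matrix n n R) (c : ι → R) :
    eval c (linearPencil A).det = (∑ i, c i • A i).det := by
  rw [RingHom.map_det]
  congr 1
  ext j k
  simp [linearPencil, Matrix.sum_apply, mul_comm]

theorem isHomogeneous_det_linearPencil (A : ι → Matrix n n R) :
    (linearPencil A).det.IsHomogeneous (Fintype.card n) :=
  isHomogeneous_det fun _ _ ↦ IsHomogeneous.sum _ _ _ fun i _ ↦ isHomogeneous_C_mul_X _ i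

end Matrix

theorem exists_small_integer_combination_invertible (n m : ℕ)
    (A : Fin m → Matrix (Fin n) (Fin n) ℚ)
    (h : ∃ c : Fin m → ℚ, (∑ i, c i • A i).det ≠ 0) :
    ∃ x : Fin m → ℤ, (∀ i, |x i| ≤ (n : ℤ)) ∧ (∑ i, (x i : ℚ) • A i).det ≠ 0 := by
  obtain ⟨c, hc⟩ := h
  have hP : (Matrix.linearPencil A).det ≠ 0 := fun hP ↦ hc <| by
    rw [← Matrix.eval_det_linearPencil, hP, map_zero]
  have hdeg : ∀ i, (Matrix.linearPencil A).det.degreeOf i ≤ n := fun i ↦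
    (degreeOf_le_totalDegree _ i).trans <| by
      simpa using (Matrix.isHomogeneous_det_linearPencil A).totalDegree_le
  obtain ⟨x, hx, hxP⟩ := exists_intCast_eval_ne_zero_of_degreeOf_le hP hdeg
  exact ⟨x, hx, Matrix.eval_det_linearPencil A _ ▸ hxP⟩
end

section
/- Let G be a positive-definite symmetric n × n matrix with rational entries and let G = LᵀL be its Cholesky decomposition with L upper triangular satisfying the LLL-type conditions L_{i+1,i+1} ≥ L_{i,i}/√2 and |L_{i,j}| ≤ L_{j,j} for all i ≤ j. Then all entries of G satisfy |G_{i,j}| ≤ n · 2^n · det(G); more precisely max_i L_{i,i}² ≤ 2^n · det(G) when additionally each partial product ∏_{i<m} L_{i,i}² is a positive integer (which holds when G is an integer matrix). -/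
/-- Entry bound for an LLL-reduced positive-definite Gram matrix via its Cholesky
decomposition `G = Lᵀ L`: every diagonal Cholesky entry satisfies
`L_{m,m}² ≤ 2^n · det G`, and all entries of `G` are bounded by `n · 2^n · det G`. -/
theorem lll_reduced_gram_entry_bound (n : ℕ) (G L : Matrix (Fin n) (Fin n) ℝ)
    (hGpd : G.PosDef)
    (hGL : G = L.transpose * L)
    (hut : ∀ i j : Fin n, j < i → L i j = 0)
    (hdiagpos : ∀ i : Fin n, 0 < L i i)
    (hstep : ∀ (i : ℕ) (h1 : i + 1 < n),
      L ⟨i, by omega⟩ ⟨i, by omega⟩ / Real.sqrt 2 ≤ L ⟨i + 1, h1⟩ ⟨i + 1, h1⟩)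
    (hsize : ∀ i j : Fin n, i ≤ j → |L i j| ≤ L j j)
    (hint : ∀ m : ℕ, m ≤ n →
      ∃ z : ℕ, 0 < z ∧
        (∏ i ∈ Finset.univ.filter (fun i : Fin n => (i : ℕ) < m), (L i i) ^ 2) = (z : ℝ)) :
    (∀ i j : Fin n, |G i j| ≤ (n : ℝ) * 2 ^ n * G.det) ∧
      ∀ i : Fin n, (L i i) ^ 2 ≤ 2 ^ n * G.det := by
  -- determinant formula
  have hdetL : L.det = ∏ i, L i i :=
    Matrix.det_of_upperTriangular (fun i j hij => hut i j hij)
  have hD : G.det = ∏ i, (L i i) ^ 2 := by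
    rw [hGL, Matrix.det_mul, Matrix.det_transpose, hdetL, ← Finset.prod_mul_distrib]
    exact Finset.prod_congr rfl fun i _ => (sq (L i i)).symm
  have hD1 : (1 : ℝ) ≤ G.det := by
    obtain ⟨z, hz, hzeq⟩ := hint n le_rfl
    have hfil : (Finset.univ.filter (fun i : Fin n => (i : ℕ) < n)) = Finset.univ := by
      apply Finset.filter_true_of_mem; intro i _; exact i.isLt
    rw [hfil] at hzeq
    rw [hD, hzeq]
    exact_mod_cast hz
  -- squared step inequality
  have stepsq : ∀ (i : ℕ) (h1 : i + 1 < n),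
      (L ⟨i, by omega⟩ ⟨i, by omega⟩) ^ 2 ≤ 2 * (L ⟨i + 1, h1⟩ ⟨i + 1, h1⟩) ^ 2 := by
    intro i h1
    have h := hstep i h1
    have hx : 0 < L ⟨i, by omega⟩ ⟨i, by omega⟩ := hdiagpos _
    have hs2 : (0 : ℝ) < Real.sqrt 2 := Real.sqrt_pos.2 (by norm_num)
    have hsq : (Real.sqrt 2) ^ 2 = 2 := Real.sq_sqrt (by norm_num)
    rw [div_le_iff₀ hs2] at h
    nlinarith [h, hx, hsq, hs2]
  -- lemma A : L m m ^ 2 ≤ 2^d * L (m+d) (m+d) ^ 2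
  have lemA : ∀ (m : Fin n) (d : ℕ) (h : (m : ℕ) + d < n),
      (L m m) ^ 2 ≤ 2 ^ d * (L ⟨(m : ℕ) + d, h⟩ ⟨(m : ℕ) + d, h⟩) ^ 2 := by
    intro m d
    induction d with
    | zero =>
      intro h
      simp
    | succ d ih =>
      intro h
      have h' : (m : ℕ) + d < n := by omega
      have h2 := stepsq ((m : ℕ) + d) h
      calc (L m m) ^ 2 ≤ 2 ^ d * (L ⟨(m : ℕ) + d, h'⟩ ⟨(m : ℕ) + d, h'⟩) ^ 2 := ih h'
        _ ≤ 2 ^ d * (2 * (L ⟨(m : ℕ) + d + 1, h⟩ ⟨(m : ℕ) + d + 1, h⟩) ^ 2) := by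
            have hpos : (0:ℝ) < 2 ^ d := by positivity
            have := stepsq ((m : ℕ) + d) h
            nlinarith [this, hpos]
        _ = 2 ^ (d + 1) * (L ⟨(m : ℕ) + (d + 1), h⟩ ⟨(m : ℕ) + (d + 1), h⟩) ^ 2 := by
            ring
  -- key bound on diagonal entries
  have key : ∀ m : Fin n, (L m m) ^ 2 ≤ 2 ^ n * G.det := by
    intro m
    rcases le_or_gt ((L m m) ^ 2) ((2 : ℝ) ^ n) with hle | hgt
    · calc (L m m) ^ 2 ≤ 2 ^ n := hle
        _ = 2 ^ n * 1 := by ring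
        _ ≤ 2 ^ n * G.det := by
            have : (0:ℝ) < 2 ^ n := by positivity
            nlinarith
    · -- each L i i ^ 2 for i ≥ m is ≥ b := L m m ^2 / 2^n > 1
      set b : ℝ := (L m m) ^ 2 / 2 ^ n with hb
      have h2n : (0 : ℝ) < 2 ^ n := by positivity
      have hb1 : 1 < b := by
        rw [hb, lt_div_iff₀ h2n]; linarith
      have hfac : ∀ i : Fin n, m ≤ i → b ≤ (L i i) ^ 2 := by
        intro i hmi
        have hmi' : (m : ℕ) ≤ (i : ℕ) := hmi
        have hd : (m : ℕ) + ((i : ℕ) - (m : ℕ)) < n := by omega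
        have hA := lemA m ((i : ℕ) - (m : ℕ)) hd
        have hieq : (⟨(m : ℕ) + ((i : ℕ) - (m : ℕ)), hd⟩ : Fin n) = i := by
          apply Fin.ext; simp; omega
        rw [hieq] at hA
        have hdn : ((i : ℕ) - (m : ℕ)) ≤ n := by omega
        have hpow : (2:ℝ) ^ ((i : ℕ) - (m : ℕ)) ≤ 2 ^ n :=
          pow_le_pow_right₀ (by norm_num) hdn
        have hLi : (0:ℝ) ≤ (L i i) ^ 2 := sq_nonneg _
        rw [hb, div_le_iff₀ h2n]
        calc (L m m) ^ 2 ≤ 2 ^ ((i : ℕ) - (m : ℕ)) * (L i i) ^ 2 := hA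
          _ ≤ 2 ^ n * (L i i) ^ 2 := by nlinarith
          _ = (L i i) ^ 2 * 2 ^ n := by ring
      -- split product
      have hsplit :
          (∏ i ∈ Finset.univ.filter (fun i : Fin n => (i : ℕ) < (m : ℕ)), (L i i) ^ 2) *
            (∏ i ∈ Finset.univ.filter (fun i : Fin n => ¬ (i : ℕ) < (m : ℕ)), (L i i) ^ 2)
            = ∏ i, (L i i) ^ 2 :=
        Finset.prod_filter_mul_prod_filter_not Finset.univ _ _
      obtain ⟨z, hz, hzeq⟩ := hint (m : ℕ) (le_of_lt m.isLt)
      have hz1 : (1 : ℝ) ≤ ∏ i ∈ Finset.univ.filter (fun i : Fin n => (i : ℕ) < (m : ℕ)),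
          (L i i) ^ 2 := by rw [hzeq]; exact_mod_cast hz
      have hSpos : ∀ i ∈ Finset.univ.filter (fun i : Fin n => ¬ (i : ℕ) < (m : ℕ)),
          (0:ℝ) ≤ b := fun _ _ => by linarith
      have hprodS : b ≤ ∏ i ∈ Finset.univ.filter (fun i : Fin n => ¬ (i : ℕ) < (m : ℕ)),
          (L i i) ^ 2 := by
        have hmem : m ∈ Finset.univ.filter (fun i : Fin n => ¬ (i : ℕ) < (m : ℕ)) := by
          simp
        have hcard : 1 ≤ (Finset.univ.filter (fun i : Fin n => ¬ (i : ℕ) < (m : ℕ))).card :=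
          Finset.card_pos.2 ⟨m, hmem⟩
        have hconst : ∀ i ∈ Finset.univ.filter (fun i : Fin n => ¬ (i : ℕ) < (m : ℕ)),
            b ≤ (L i i) ^ 2 := by
          intro i hi
          simp only [Finset.mem_filter, Finset.mem_univ, true_and, not_lt] at hi
          exact hfac i hi
        calc b = b ^ 1 := (pow_one b).symm
          _ ≤ b ^ (Finset.univ.filter (fun i : Fin n => ¬ (i : ℕ) < (m : ℕ))).card :=
            pow_le_pow_right₀ (le_of_lt hb1) hcard
          _ = ∏ i ∈ Finset.univ.filter (fun i : Fin n => ¬ (i : ℕ) < (m : ℕ)), b :=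
            (Finset.prod_const b).symm
          _ ≤ ∏ i ∈ Finset.univ.filter (fun i : Fin n => ¬ (i : ℕ) < (m : ℕ)), (L i i) ^ 2 :=
            Finset.prod_le_prod (fun i _ => by linarith) hconst
      have hbD : b ≤ G.det := by
        rw [hD, ← hsplit]
        have hprodnonneg : (0:ℝ) ≤ ∏ i ∈ Finset.univ.filter
            (fun i : Fin n => ¬ (i : ℕ) < (m : ℕ)), (L i i) ^ 2 := by
          apply Finset.prod_nonneg; intro i _; exact sq_nonneg _
        nlinarith [hz1, hprodS, hprodnonneg]
      have : (L m m) ^ 2 = 2 ^ n * b := by rw [hb]; field_simp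
      rw [this]
      nlinarith [hbD, h2n]
  constructor
  · intro i j
    have habsL : ∀ k l : Fin n, |L k l| ≤ L l l := by
      intro k l
      rcases le_or_gt k l with h | h
      · exact hsize k l h
      · rw [hut k l h]; simpa using (hdiagpos l).le
    have hGij : G i j = ∑ k, L k i * L k j := by
      rw [hGL, Matrix.mul_apply]
      exact Finset.sum_congr rfl fun k _ => rfl
    have h1 : |G i j| ≤ ∑ k : Fin n, |L k i * L k j| := by
      rw [hGij]; exact Finset.abs_sum_le_sum_abs _ _
    have h2 : ∑ k : Fin n, |L k i * L k j| ≤ ∑ k : Fin n, L i i * L j j := by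
      apply Finset.sum_le_sum
      intro k _
      rw [abs_mul]
      exact mul_le_mul (habsL k i) (habsL k j) (abs_nonneg _) (hdiagpos i).le
    have h3 : ∑ k : Fin n, L i i * L j j = (n : ℝ) * (L i i * L j j) := by
      rw [Finset.sum_const, Finset.card_univ, Fintype.card_fin, nsmul_eq_mul]
    have h4 : L i i * L j j ≤ 2 ^ n * G.det := by
      have ki := key i
      have kj := key j
      nlinarith [sq_nonneg (L i i - L j j), hdiagpos i, hdiagpos j]
    have hn : (0:ℝ) ≤ (n : ℝ) := Nat.cast_nonneg n
    calc |G i j| ≤ ∑ k : Fin n, L i i * L j j := le_trans h1 h2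
      _ = (n : ℝ) * (L i i * L j j) := h3
      _ ≤ (n : ℝ) * (2 ^ n * G.det) := by
          apply mul_le_mul_of_nonneg_left h4 hn
      _ = (n : ℝ) * 2 ^ n * G.det := by ring
  · exact key
end

section
/- Let O be a CM order (order with involutive automorphism and positive-definite x ↦ tr(x·x̄)), I = (v) an integral invertible principal ideal, and x ∈ I \ {0} an element minimizing tr(x·x̄) over I \ {0}. Then there exists a nonzero y in v·O⁺ ∪ v·O⁻ (where O⁺ = {a ∈ O : ā = a} and O⁻ = {a ∈ O : ā = −a}) with 0 < tr(y·ȳ) ≤ 2·tr(x·x̄). Moreover v·O⁺ ⊆ I and v·O⁻ ⊆ I. -/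
section

variable {O F : Type*} [CommRing O]

lemma trform_add (a b : O) : trform (a + b) = trform a + trform b := by
  change LinearMap.trace ℤ O (LinearMap.mul ℤ O (a + b)) = _
  rw [map_add, map_add]
  rfl

variable [FunLike F O O]

lemma map_add_self_of_involutive [AddMonoidHomClass F O O] (σ : F) (hσ : Function.Involutive σ)
    (z : O) : σ (z + σ z) = z + σ z := by
  rw [map_add, hσ, add_comm]

lemma map_sub_self_of_involutive [AddMonoidHomClass F O O] (σ : F) (hσ : Function.Involutive σ)
    (z : O) : σ (z - σ z) = -(z - σ z) := by
  rw [map_sub, hσ, neg_sub]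

lemma trform_parallelogram [AddMonoidHomClass F O O] (σ : F) (u w : O) :
    trform ((u + w) * σ (u + w)) + trform ((u - w) * σ (u - w)) =
      2 * (trform (u * σ u) + trform (w * σ w)) := by
  have h : (u + w) * σ (u + w) + (u - w) * σ (u - w) =
      (u * σ u + w * σ w) + (u * σ u + w * σ w) := by
    rw [map_add, map_sub]; ring
  rw [← trform_add, h, trform_add, trform_add]
  ring

variable [RingHomClass F O O]

lemma exists_fixed_or_antifixed_trform_le (σ : F) (hσ : Function.Involutive σ) (v : O) {z : O}
    (hz : z ≠ 0) (hQ : 0 ≤ trform (v * z * σ (v * z))) :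
    ∃ a ≠ 0, (σ a = a ∨ σ a = -a) ∧
      trform (v * a * σ (v * a)) ≤ 2 * trform (v * z * σ (v * z)) := by
  by_cases hfix : σ z = z
  · exact ⟨z, hz, .inl hfix, by linarith⟩
  by_cases hanti : σ z = -z
  · exact ⟨z, hz, .inr hanti, by linarith⟩
  have hconj : v * σ z * σ (v * σ z) = v * z * σ (v * z) := by
    rw [map_mul, map_mul, hσ]; ring
  have hsum := trform_parallelogram σ (v * z) (v * σ z)
  rw [← mul_add, ← mul_sub, hconj] at hsum
  rcases le_or_gt (trform (v * (z + σ z) * σ (v * (z + σ z)))) (2 * trform (v * z * σ (v * z)))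
    with hle | hgt
  · refine ⟨z + σ z, fun h => hanti ?_, .inl (map_add_self_of_involutive σ hσ z), hle⟩
    exact (neg_eq_of_add_eq_zero_right h).symm
  · refine ⟨z - σ z, fun h => hfix (sub_eq_zero.mp h).symm,
      .inr (map_sub_self_of_involutive σ hσ z), by linarith⟩

end

theorem cm_order_short_vector_real_or_imaginary_general {O : Type*} [CommRing O]
    (σ : O ≃+* O) (hσ : ∀ x : O, σ (σ x) = x)
    (hpos : ∀ x : O, x ≠ 0 → 0 < trform (x * σ x))
    (v : O) (hv : v ∈ nonZeroDivisors O)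
    (x : O) (hxI : x ∈ Ideal.span ({v} : Set O)) (hx0 : x ≠ 0) :
    (∃ y : O, y ≠ 0 ∧
        ((∃ a : O, σ a = a ∧ y = v * a) ∨ (∃ a : O, σ a = -a ∧ y = v * a)) ∧
        0 < trform (y * σ y) ∧ trform (y * σ y) ≤ 2 * trform (x * σ x)) ∧
    (∀ a : O, σ a = a → v * a ∈ Ideal.span ({v} : Set O)) ∧
    (∀ a : O, σ a = -a → v * a ∈ Ideal.span ({v} : Set O)) := by
  refine ⟨?_, fun a _ => Ideal.mem_span_singleton.mpr ⟨a, rfl⟩,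
    fun a _ => Ideal.mem_span_singleton.mpr ⟨a, rfl⟩⟩
  obtain ⟨z, rfl⟩ := Ideal.mem_span_singleton.mp hxI
  obtain ⟨a, ha, hsym, hle⟩ :=
    exists_fixed_or_antifixed_trform_le σ hσ v (right_ne_zero_of_mul hx0) (hpos _ hx0).le
  have hva : v * a ≠ 0 := fun h => ha (hv.1 a h)
  exact ⟨v * a, hva, hsym.imp (⟨a, ·, rfl⟩) (⟨a, ·, rfl⟩), hpos _ hva, hle⟩

/-- Dimension halving: a minimizer of the norm form on a principal ideal `(v)` of a CM
order yields a nonzero element of `v·O⁺` or `v·O⁻` of at most twice the squared norm. -/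
theorem cm_order_short_vector_real_or_imaginary {O : Type*} [CommRing O]
    [Module.Free ℤ O] [Module.Finite ℤ O]
    (σ : O ≃+* O) (hσ : ∀ x : O, σ (σ x) = x)
    (hpos : ∀ x : O, x ≠ 0 → 0 < trform (x * σ x))
    (v : O) (hv : v ∈ nonZeroDivisors O)
    (x : O) (hxI : x ∈ Ideal.span ({v} : Set O)) (hx0 : x ≠ 0)
    (hmin : ∀ z ∈ Ideal.span ({v} : Set O), z ≠ 0 → trform (x * σ x) ≤ trform (z * σ z)) :
    (∃ y : O, y ≠ 0 ∧
        ((∃ a : O, σ a = a ∧ y = v * a) ∨ (∃ a : O, σ a = -a ∧ y = v * a)) ∧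
        0 < trform (y * σ y) ∧ trform (y * σ y) ≤ 2 * trform (x * σ x)) ∧
    (∀ a : O, σ a = a → v * a ∈ Ideal.span ({v} : Set O)) ∧
    (∀ a : O, σ a = -a → v * a ∈ Ideal.span ({v} : Set O)) :=
  cm_order_short_vector_real_or_imaginary_general σ hσ hpos v hv x hxI hx0
end
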